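/- Let L be a real symmetric p×p matrix with eigenvalues λ₁ ≥ ⋯ ≥ λ_p and corresponding orthonormal eigenvectors u₁,…,u_p, and let L̂ be another symmetric matrix with eigenvectors û₁,…,û_p. For a fixed index i, let δ_i = min(λ_{i-1} - λ_i, λ_i - λ_{i+1}) > 0 (interpreting boundary cases appropriately). Then there is a sign s ∈ {±1} such that ‖û_i - s u_i‖₂ ≤ 2^{3/2} ‖L̂ - L‖₂ / δ_i. -/

import Mathlib

open Matrix
open scoped Matrix.Norms.L2Operator

/-- Euclidean norm of a vector in `Fin p → ℝ`. -/
noncomputable def euclNorm {p : ℕ} (v : Fin p → ℝ) : ℝ := Real.sqrt (v ⬝ᵥ v)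

section Aux

variable {p : ℕ} {u : Fin p → (Fin p → ℝ)}

private lemma sum_dot (f : Fin p → (Fin p → ℝ)) (w : Fin p → ℝ) :
    (∑ j, f j) ⬝ᵥ w = ∑ j, f j ⬝ᵥ w := by
  simp only [dotProduct, Finset.sum_apply, Finset.sum_mul]
  exact Finset.sum_comm

private lemma dot_sum (w : Fin p → ℝ) (f : Fin p → (Fin p → ℝ)) :
    w ⬝ᵥ (∑ j, f j) = ∑ j, w ⬝ᵥ f j := by
  simp only [dotProduct, Finset.sum_apply, Finset.mul_sum]
  exact Finset.sum_comm

private lemma dot_sum_right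
    (huorth : ∀ i j : Fin p, u i ⬝ᵥ u j = if i = j then (1 : ℝ) else 0)
    (a : Fin p → ℝ) (k : Fin p) : u k ⬝ᵥ (∑ j, a j • u j) = a k := by
  rw [dot_sum]
  have : ∀ j, u k ⬝ᵥ (a j • u j) = if k = j then a j else 0 := by
    intro j
    rw [dotProduct_smul, huorth]
    by_cases h : k = j <;> simp [h]
  simp [this]

private lemma dot_sum_sum
    (huorth : ∀ i j : Fin p, u i ⬝ᵥ u j = if i = j then (1 : ℝ) else 0)
    (a b : Fin p → ℝ) :
    (∑ j, a j • u j) ⬝ᵥ (∑ k, b k • u k) = ∑ j, a j * b j := by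
  rw [sum_dot]
  congr 1
  ext j
  rw [smul_dotProduct, dot_sum_right huorth, smul_eq_mul]

private lemma orth_linearIndependent
    (huorth : ∀ i j : Fin p, u i ⬝ᵥ u j = if i = j then (1 : ℝ) else 0) :
    LinearIndependent ℝ u := by
  rw [Fintype.linearIndependent_iff]
  intro g hg k
  have := dot_sum_right huorth g k
  rw [hg] at this
  simpa using this.symm

/-- Completeness: `p` orthonormal vectors in `ℝ^p` form a basis; expansion formula. -/
private lemma expansion
    (huorth : ∀ i j : Fin p, u i ⬝ᵥ u j = if i = j then (1 : ℝ) else 0)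
    (hp : 0 < p)
    (v : Fin p → ℝ) : v = ∑ j, (u j ⬝ᵥ v) • u j := by
  haveI : Nonempty (Fin p) := ⟨⟨0, hp⟩⟩
  have hli := orth_linearIndependent huorth
  have hspan : Submodule.span ℝ (Set.range u) = ⊤ := by
    apply LinearIndependent.span_eq_top_of_card_eq_finrank hli
    simp [Module.finrank_fin_fun]
  have hv : v ∈ Submodule.span ℝ (Set.range u) := by rw [hspan]; trivial
  obtain ⟨c, hc⟩ := (Submodule.mem_span_range_iff_exists_fun ℝ).1 hv
  have hck : ∀ k, u k ⬝ᵥ v = c k := by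
    intro k
    rw [← hc, dot_sum_right huorth]
  calc v = ∑ j, c j • u j := hc.symm
    _ = ∑ j, (u j ⬝ᵥ v) • u j := by simp [hck]

/-- Coefficients for membership in the span of a sub-family. -/
private lemma span_coeffs (P : Fin p → Prop) [DecidablePred P] {w : Fin p → ℝ}
    (hw : w ∈ Submodule.span ℝ (Set.range fun j : {j : Fin p // P j} => u j)) :
    ∃ a : Fin p → ℝ, (∀ j, ¬ P j → a j = 0) ∧ w = ∑ j, a j • u j := by
  obtain ⟨c, hc⟩ := (Submodule.mem_span_range_iff_exists_fun ℝ).1 hw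
  refine ⟨fun j => if h : P j then c ⟨j, h⟩ else 0, fun j hj => dif_neg hj, ?_⟩
  have hzero : ∀ x ∈ Finset.univ, x ∉ Finset.univ.filter P →
      (if h : P x then c ⟨x, h⟩ else 0) • u x = 0 := by
    intro x _ hx
    have hpx : ¬ P x := by simpa using hx
    rw [dif_neg hpx, zero_smul]
  symm
  show (∑ j, (if h : P j then c ⟨j, h⟩ else 0) • u j) = w
  calc ∑ j, (if h : P j then c ⟨j, h⟩ else 0) • u j
      = ∑ j ∈ Finset.univ.filter P, (if h : P j then c ⟨j, h⟩ else 0) • u j :=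
        (Finset.sum_subset (Finset.filter_subset P Finset.univ) hzero).symm
    _ = ∑ j : {j : Fin p // P j}, (if h : P (j : Fin p) then c ⟨j, h⟩ else 0) • u j :=
        Finset.sum_subtype _ (by simp) _
    _ = ∑ j : {j : Fin p // P j}, c j • u j := by
        apply Finset.sum_congr rfl
        intro x _
        rw [dif_pos x.2]
    _ = w := hc

end Aux

section Quad

variable {p : ℕ}

private lemma quad_form (L : Matrix (Fin p) (Fin p) ℝ) (lam : Fin p → ℝ)
    {u : Fin p → (Fin p → ℝ)}
    (huorth : ∀ i j : Fin p, u i ⬝ᵥ u j = if i = j then (1 : ℝ) else 0)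
    (hueig : ∀ j, L.mulVec (u j) = lam j • u j)
    (a : Fin p → ℝ) :
    (∑ j, a j • u j) ⬝ᵥ L.mulVec (∑ j, a j • u j) = ∑ j, a j ^ 2 * lam j := by
  have hmv : L.mulVec (∑ j, a j • u j) = ∑ j, (a j * lam j) • u j := by
    have : L.mulVec (∑ j, a j • u j) = ∑ j, L.mulVec (a j • u j) :=
      map_sum L.mulVecLin (fun j => a j • u j) Finset.univ
    rw [this]
    apply Finset.sum_congr rfl
    intro j _
    rw [mulVec_smul, hueig, smul_smul]
  rw [hmv, dot_sum_sum huorth]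
  apply Finset.sum_congr rfl
  intro j _
  ring

private lemma self_dot (u : Fin p → (Fin p → ℝ))
    (huorth : ∀ i j : Fin p, u i ⬝ᵥ u j = if i = j then (1 : ℝ) else 0)
    (a : Fin p → ℝ) :
    (∑ j, a j • u j) ⬝ᵥ (∑ j, a j • u j) = ∑ j, a j ^ 2 := by
  rw [dot_sum_sum huorth]
  apply Finset.sum_congr rfl
  intro j _
  ring

end Quad


section Norms

variable {p : ℕ}

private lemma dot_eq_inner (x y : Fin p → ℝ) :
    x ⬝ᵥ y = @inner ℝ (EuclideanSpace ℝ (Fin p)) _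
      ((WithLp.equiv 2 (Fin p → ℝ)).symm x) ((WithLp.equiv 2 (Fin p → ℝ)).symm y) := by
  rw [PiLp.inner_apply]
  simp [dotProduct, RCLike.inner_apply, mul_comm]

private lemma dot_self_eq_norm_sq (x : Fin p → ℝ) :
    x ⬝ᵥ x = ‖(WithLp.equiv 2 (Fin p → ℝ)).symm x‖ ^ 2 := by
  rw [dot_eq_inner, real_inner_self_eq_norm_sq]

private lemma dot_mulVec_le (E : Matrix (Fin p) (Fin p) ℝ) (w : Fin p → ℝ) :
    w ⬝ᵥ E.mulVec w ≤ ‖E‖ * (w ⬝ᵥ w) := by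
  set w' : EuclideanSpace ℝ (Fin p) := (WithLp.equiv 2 (Fin p → ℝ)).symm w with hw'
  have h1 : w ⬝ᵥ E.mulVec w =
      @inner ℝ (EuclideanSpace ℝ (Fin p)) _ w'
        ((WithLp.equiv 2 (Fin p → ℝ)).symm (E.mulVec w)) := dot_eq_inner _ _
  have h2 := real_inner_le_norm w' ((WithLp.equiv 2 (Fin p → ℝ)).symm (E.mulVec w))
  have h3 : ‖(WithLp.equiv 2 (Fin p → ℝ)).symm (E.mulVec w)‖ ≤ ‖E‖ * ‖w'‖ :=
    E.l2_opNorm_mulVec w'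
  have h4 : w ⬝ᵥ w = ‖w'‖ ^ 2 := dot_self_eq_norm_sq w
  have hn : (0:ℝ) ≤ ‖w'‖ := norm_nonneg _
  calc w ⬝ᵥ E.mulVec w ≤ ‖w'‖ * ‖(WithLp.equiv 2 (Fin p → ℝ)).symm (E.mulVec w)‖ := by
        rw [h1]; exact h2
    _ ≤ ‖w'‖ * (‖E‖ * ‖w'‖) := mul_le_mul_of_nonneg_left h3 hn
    _ = ‖E‖ * (w ⬝ᵥ w) := by rw [h4]; ring

private lemma mulVec_dot_self_le (E : Matrix (Fin p) (Fin p) ℝ) (w : Fin p → ℝ) :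
    (E.mulVec w) ⬝ᵥ (E.mulVec w) ≤ ‖E‖ ^ 2 * (w ⬝ᵥ w) := by
  have h1 : (E.mulVec w) ⬝ᵥ (E.mulVec w) =
      ‖(WithLp.equiv 2 (Fin p → ℝ)).symm (E.mulVec w)‖ ^ 2 := dot_self_eq_norm_sq _
  have h3 : ‖(WithLp.equiv 2 (Fin p → ℝ)).symm (E.mulVec w)‖ ≤
      ‖E‖ * ‖(WithLp.equiv 2 (Fin p → ℝ)).symm w‖ :=
    E.l2_opNorm_mulVec ((WithLp.equiv 2 (Fin p → ℝ)).symm w)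
  have h4 : w ⬝ᵥ w = ‖(WithLp.equiv 2 (Fin p → ℝ)).symm w‖ ^ 2 := dot_self_eq_norm_sq w
  have hE : (0:ℝ) ≤ ‖E‖ := norm_nonneg _
  nlinarith [norm_nonneg ((WithLp.equiv 2 (Fin p → ℝ)).symm (E.mulVec w)),
    norm_nonneg ((WithLp.equiv 2 (Fin p → ℝ)).symm w)]

end Norms

section Weyl

variable {p : ℕ}

private lemma weyl_one_side
    (L Lhat : Matrix (Fin p) (Fin p) ℝ)
    (lam lamhat : Fin p → ℝ)
    (hsort : ∀ i j : Fin p, i ≤ j → lam j ≤ lam i)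
    (hsorthat : ∀ i j : Fin p, i ≤ j → lamhat j ≤ lamhat i)
    (u uhat : Fin p → (Fin p → ℝ))
    (huorth : ∀ i j : Fin p, u i ⬝ᵥ u j = if i = j then (1 : ℝ) else 0)
    (huhatorth : ∀ i j : Fin p, uhat i ⬝ᵥ uhat j = if i = j then (1 : ℝ) else 0)
    (hueig : ∀ j, L.mulVec (u j) = lam j • u j)
    (huhateig : ∀ j, Lhat.mulVec (uhat j) = lamhat j • uhat j)
    (i : Fin p) : lam i ≤ lamhat i + ‖Lhat - L‖ := by
  classical
  set V : Submodule ℝ (Fin p → ℝ) :=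
    Submodule.span ℝ (Set.range fun j : {j : Fin p // j ≤ i} => u j) with hV
  set W : Submodule ℝ (Fin p → ℝ) :=
    Submodule.span ℝ (Set.range fun j : {j : Fin p // i ≤ j} => uhat j) with hW
  have hliu : LinearIndependent ℝ (fun j : {j : Fin p // j ≤ i} => u j) :=
    (orth_linearIndependent huorth).comp _ Subtype.val_injective
  have hliuhat : LinearIndependent ℝ (fun j : {j : Fin p // i ≤ j} => uhat j) :=
    (orth_linearIndependent huhatorth).comp _ Subtype.val_injective
  have hdimV : Module.finrank ℝ V = (i : ℕ) + 1 := by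
    rw [hV, finrank_span_eq_card hliu, Fintype.card_subtype, ← Fin.card_Iic i]
    congr 1; ext x; simp
  have hdimW : Module.finrank ℝ W = p - (i : ℕ) := by
    rw [hW, finrank_span_eq_card hliuhat, Fintype.card_subtype, ← Fin.card_Ici i]
    congr 1; ext x; simp
  have hsum := Submodule.finrank_sup_add_finrank_inf_eq V W
  have hle : Module.finrank ℝ ↥(V ⊔ W) ≤ p :=
    le_trans (Submodule.finrank_le _) (le_of_eq (Module.finrank_fin_fun ℝ))
  have hpos : 0 < Module.finrank ℝ ↥(V ⊓ W) := by
    have hi : (i : ℕ) < p := i.2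
    omega
  obtain ⟨x, hx⟩ := Module.finrank_pos_iff_exists_ne_zero.mp hpos
  set w : Fin p → ℝ := (x : Fin p → ℝ) with hwdef
  have hwV : w ∈ V := x.2.1
  have hwW : w ∈ W := x.2.2
  have hwne : w ≠ 0 := fun h => hx (Subtype.ext h)
  obtain ⟨a, ha0, haw⟩ := span_coeffs (fun j => j ≤ i) hwV
  obtain ⟨b, hb0, hbw⟩ := span_coeffs (fun j => i ≤ j) hwW
  have hww_a : w ⬝ᵥ w = ∑ j, a j ^ 2 := by rw [haw]; exact self_dot u huorth a
  have hww_b : w ⬝ᵥ w = ∑ j, b j ^ 2 := by rw [hbw]; exact self_dot uhat huhatorth b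
  have hLw : w ⬝ᵥ L.mulVec w = ∑ j, a j ^ 2 * lam j := by
    rw [haw]; exact quad_form L lam huorth hueig a
  have hLhatw : w ⬝ᵥ Lhat.mulVec w = ∑ j, b j ^ 2 * lamhat j := by
    rw [hbw]; exact quad_form Lhat lamhat huhatorth huhateig b
  have hwwpos : 0 < w ⬝ᵥ w := by
    have h0 : 0 ≤ w ⬝ᵥ w := by
      rw [hww_a]; exact Finset.sum_nonneg fun j _ => sq_nonneg _
    rcases lt_or_eq_of_le h0 with h | h
    · exact h
    · exfalso
      apply hwne
      have hnorm : ‖(WithLp.equiv 2 (Fin p → ℝ)).symm w‖ ^ 2 = 0 := by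
        rw [← dot_self_eq_norm_sq, ← h]
      have : (WithLp.equiv 2 (Fin p → ℝ)).symm w = 0 := by
        have := pow_eq_zero_iff (n := 2) (by norm_num) |>.mp hnorm
        exact norm_eq_zero.mp this
      simpa using this
  -- quadratic form bounds
  have hlow : lam i * (w ⬝ᵥ w) ≤ w ⬝ᵥ L.mulVec w := by
    rw [hLw, hww_a, Finset.mul_sum]
    apply Finset.sum_le_sum
    intro j _
    by_cases hji : j ≤ i
    · have := hsort j i hji
      nlinarith [sq_nonneg (a j)]
    · rw [ha0 j hji]; simp
  have hhigh : w ⬝ᵥ Lhat.mulVec w ≤ lamhat i * (w ⬝ᵥ w) := by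
    rw [hLhatw, hww_b, Finset.mul_sum]
    apply Finset.sum_le_sum
    intro j _
    by_cases hij : i ≤ j
    · have := hsorthat i j hij
      nlinarith [sq_nonneg (b j)]
    · rw [hb0 j hij]; simp
  have hE : w ⬝ᵥ (Lhat - L).mulVec w ≤ ‖Lhat - L‖ * (w ⬝ᵥ w) := dot_mulVec_le _ w
  have hsplit : w ⬝ᵥ (Lhat - L).mulVec w = w ⬝ᵥ Lhat.mulVec w - w ⬝ᵥ L.mulVec w := by
    rw [Matrix.sub_mulVec, dotProduct_sub]
  have hE2 : w ⬝ᵥ (L - Lhat).mulVec w ≤ ‖L - Lhat‖ * (w ⬝ᵥ w) := dot_mulVec_le _ w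
  have hsplit2 : w ⬝ᵥ (L - Lhat).mulVec w = w ⬝ᵥ L.mulVec w - w ⬝ᵥ Lhat.mulVec w := by
    rw [Matrix.sub_mulVec, dotProduct_sub]
  have hrev : ‖L - Lhat‖ = ‖Lhat - L‖ := norm_sub_rev _ _
  -- combine
  have key : lam i * (w ⬝ᵥ w) ≤ (lamhat i + ‖Lhat - L‖) * (w ⬝ᵥ w) := by
    have e1 : w ⬝ᵥ L.mulVec w - w ⬝ᵥ Lhat.mulVec w ≤ ‖Lhat - L‖ * (w ⬝ᵥ w) := by
      rw [← hrev, ← hsplit2]; exact hE2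
    have e2 : (lamhat i + ‖Lhat - L‖) * (w ⬝ᵥ w)
        = lamhat i * (w ⬝ᵥ w) + ‖Lhat - L‖ * (w ⬝ᵥ w) := by ring
    rw [e2]
    linarith
  exact le_of_mul_le_mul_right key hwwpos

end Weyl

set_option maxHeartbeats 1000000 in
/-- Davis–Kahan eigenvector perturbation bound (Yu–Wang–Samworth form): if `L` is a
symmetric matrix with eigenvalues `λ₁ ≥ ⋯ ≥ λ_p` and orthonormal eigenvectors `uⱼ`, `L̂`
is symmetric with eigenvalues `λ̂₁ ≥ ⋯ ≥ λ̂_p` and orthonormal eigenvectors `ûⱼ`, and the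
eigengap of `λᵢ` to the rest of the spectrum is at least `δᵢ > 0`, then for some sign
`s = ±1` we have `‖ûᵢ - s uᵢ‖ ≤ 2^{3/2} ‖L̂ - L‖₂ / δᵢ`. -/
theorem davis_kahan_eigenvector_bound
    (p : ℕ)
    (L Lhat : Matrix (Fin p) (Fin p) ℝ)
    (hLsym : L.IsSymm) (hLhatsym : Lhat.IsSymm)
    (lam lamhat : Fin p → ℝ)
    (hsort : ∀ i j : Fin p, i ≤ j → lam j ≤ lam i)
    (hsorthat : ∀ i j : Fin p, i ≤ j → lamhat j ≤ lamhat i)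
    (u uhat : Fin p → (Fin p → ℝ))
    (huorth : ∀ i j : Fin p, u i ⬝ᵥ u j = if i = j then (1 : ℝ) else 0)
    (huhatorth : ∀ i j : Fin p, uhat i ⬝ᵥ uhat j = if i = j then (1 : ℝ) else 0)
    (hueig : ∀ j, L.mulVec (u j) = lam j • u j)
    (huhateig : ∀ j, Lhat.mulVec (uhat j) = lamhat j • uhat j)
    (i : Fin p) (δ : ℝ) (hδpos : 0 < δ)
    (hgap : ∀ j : Fin p, j ≠ i → δ ≤ |lam j - lam i|) :
    ∃ s : ℝ, (s = 1 ∨ s = -1) ∧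
      euclNorm (uhat i - s • u i) ≤ 2 ^ ((3 : ℝ) / 2) * ‖Lhat - L‖ / δ := by
  classical
  set E : Matrix (Fin p) (Fin p) ℝ := Lhat - L with hE
  set ε : ℝ := ‖Lhat - L‖ with hεdef
  have hεnn : 0 ≤ ε := norm_nonneg _
  have hp : 0 < p := i.pos
  set v : Fin p → ℝ := uhat i with hvdef
  set c : Fin p → ℝ := fun j => u j ⬝ᵥ v with hcdef
  -- Weyl's inequality in both directions
  have hw1 : lam i ≤ lamhat i + ε :=
    weyl_one_side L Lhat lam lamhat hsort hsorthat u uhat huorth huhatorth hueig huhateig i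
  have hw2 : lamhat i ≤ lam i + ε := by
    have h := weyl_one_side Lhat L lamhat lam hsorthat hsort uhat u huhatorth huorth
      huhateig hueig i
    rwa [norm_sub_rev] at h
  -- expansion of v in the u-basis
  have hvexp : v = ∑ j, c j • u j := expansion huorth hp v
  have hvv : v ⬝ᵥ v = 1 := by simpa using huhatorth i i
  have hsumc : ∑ j, c j ^ 2 = 1 := by
    have h := self_dot u huorth c
    rw [← hvexp, hvv] at h
    exact h.symm
  -- dot products with E *ᵥ v
  have hkey : ∀ j, u j ⬝ᵥ E.mulVec v = (lamhat i - lam j) * c j := by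
    intro j
    have h1 : E.mulVec v = lamhat i • v - L.mulVec v := by
      rw [hE, Matrix.sub_mulVec]
      congr 1
      exact huhateig i
    have h2 : u j ⬝ᵥ L.mulVec v = lam j * c j := by
      rw [Matrix.dotProduct_mulVec, ← Matrix.mulVec_transpose, hLsym.eq, hueig,
        smul_dotProduct, smul_eq_mul]
    rw [h1, dotProduct_sub, dotProduct_smul, h2]
    have : u j ⬝ᵥ v = c j := rfl
    rw [this, smul_eq_mul]
    ring
  -- norm of E *ᵥ v in coefficients
  have hEvexp : E.mulVec v = ∑ j, ((lamhat i - lam j) * c j) • u j := by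
    have h := expansion huorth hp (E.mulVec v)
    rw [h]
    exact Finset.sum_congr rfl fun j _ => by rw [hkey j]
  have hEvnorm : ∑ j, ((lamhat i - lam j) * c j) ^ 2 ≤ ε ^ 2 := by
    have h1 : (E.mulVec v) ⬝ᵥ (E.mulVec v) = ∑ j, ((lamhat i - lam j) * c j) ^ 2 := by
      conv_lhs => rw [hEvexp]
      exact self_dot u huorth _
    have h2 := mulVec_dot_self_le E v
    rw [hvv, mul_one, h1] at h2
    rwa [hεdef]
  -- the sign
  set s : ℝ := if 0 ≤ c i then 1 else -1 with hsdef
  have hs : s = 1 ∨ s = -1 := by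
    by_cases h : 0 ≤ c i
    · left; rw [hsdef, if_pos h]
    · right; rw [hsdef, if_neg h]
  have hsc : s * c i = |c i| := by
    by_cases h : 0 ≤ c i
    · rw [hsdef, if_pos h, abs_of_nonneg h, one_mul]
    · rw [hsdef, if_neg h, abs_of_neg (lt_of_not_ge h)]; ring
  have hs2 : s ^ 2 = 1 := by rcases hs with h | h <;> rw [h] <;> norm_num
  -- squared distance
  have hq : (uhat i - s • u i) ⬝ᵥ (uhat i - s • u i) = 2 - 2 * (s * c i) := by
    rw [sub_dotProduct, dotProduct_sub, dotProduct_sub, smul_dotProduct, smul_dotProduct,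
      dotProduct_smul, dotProduct_smul]
    have e1 : uhat i ⬝ᵥ uhat i = 1 := hvv
    have e2 : u i ⬝ᵥ u i = 1 := by simpa using huorth i i
    have e3 : u i ⬝ᵥ uhat i = c i := rfl
    have e4 : uhat i ⬝ᵥ u i = c i := by rw [dotProduct_comm]
    rw [e1, e2, e3, e4]
    simp only [smul_eq_mul]
    nlinarith [hs2]
  have hcisq : c i ^ 2 ≤ 1 := by
    rw [← hsumc]
    exact Finset.single_le_sum (fun j _ => sq_nonneg (c j)) (Finset.mem_univ i)
  have hci1 : |c i| ≤ 1 := by nlinarith [sq_abs (c i), abs_nonneg (c i)]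
  -- main quadratic bound
  have hmain : 2 - 2 * (s * c i) ≤ 8 * ε ^ 2 / δ ^ 2 := by
    rw [hsc]
    rcases le_or_gt (δ / 2) ε with hcase | hcase
    · have h2 : (2:ℝ) ≤ 8 * ε ^ 2 / δ ^ 2 := by
        rw [le_div_iff₀ (by positivity)]
        nlinarith [sq_nonneg (2 * ε - δ)]
      nlinarith [abs_nonneg (c i)]
    · -- ε < δ/2 : use the gap
      have hΔ : |lamhat i - lam i| ≤ ε := abs_le.2 ⟨by linarith, by linarith⟩
      have hgap2 : ∀ j, j ≠ i → δ - ε ≤ |lamhat i - lam j| := by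
        intro j hj
        have h1 := hgap j hj
        have h2 : |lam j - lam i| ≤ |lam j - lamhat i| + |lamhat i - lam i| :=
          abs_sub_le (lam j) (lamhat i) (lam i)
        have h3 : |lamhat i - lam j| = |lam j - lamhat i| := abs_sub_comm _ _
        linarith
      have hterm : ∀ j ∈ Finset.univ.erase i,
          (δ - ε) ^ 2 * c j ^ 2 ≤ ((lamhat i - lam j) * c j) ^ 2 := by
        intro j hj
        have hjne : j ≠ i := (Finset.mem_erase.mp hj).1
        have h1 := hgap2 j hjne
        have h2 : (δ - ε) ^ 2 ≤ (lamhat i - lam j) ^ 2 := by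
          have hnn : 0 ≤ δ - ε := by linarith
          nlinarith [abs_nonneg (lamhat i - lam j), sq_abs (lamhat i - lam j)]
        nlinarith [sq_nonneg (c j)]
      have hsum2 : (δ - ε) ^ 2 * (1 - c i ^ 2) ≤ ε ^ 2 := by
        have hsplit : ∑ j, c j ^ 2 = c i ^ 2 + ∑ j ∈ Finset.univ.erase i, c j ^ 2 :=
          (Finset.add_sum_erase Finset.univ (fun j => c j ^ 2) (Finset.mem_univ i)).symm
        have h1 : (δ - ε) ^ 2 * (1 - c i ^ 2) = ∑ j ∈ Finset.univ.erase i,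
            (δ - ε) ^ 2 * c j ^ 2 := by
          rw [← Finset.mul_sum]
          congr 1
          rw [← hsumc, hsplit]; ring
        have h2 : ∑ j ∈ Finset.univ.erase i, ((lamhat i - lam j) * c j) ^ 2 ≤
            ∑ j, ((lamhat i - lam j) * c j) ^ 2 :=
          Finset.sum_le_sum_of_subset_of_nonneg (Finset.erase_subset _ _)
            (fun j _ _ => sq_nonneg _)
        have h3 := Finset.sum_le_sum hterm
        rw [h1]
        linarith
      have hde : δ / 2 < δ - ε := by linarith
      have hde2 : δ ^ 2 / 4 ≤ (δ - ε) ^ 2 := by nlinarith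
      have hnn : (0:ℝ) ≤ 1 - c i ^ 2 := by nlinarith
      have h4 : δ ^ 2 / 4 * (1 - c i ^ 2) ≤ ε ^ 2 := by
        nlinarith [mul_le_mul_of_nonneg_right hde2 hnn]
      have habs : 2 - 2 * |c i| ≤ 2 * (1 - c i ^ 2) := by
        nlinarith [sq_abs (c i), abs_nonneg (c i), hci1]
      rw [le_div_iff₀ (by positivity)]
      nlinarith [mul_le_mul_of_nonneg_right habs (sq_nonneg δ)]
  refine ⟨s, hs, ?_⟩
  rw [euclNorm, hq]
  have hsq : (2 ^ ((3:ℝ)/2) * ε / δ) ^ 2 = 8 * ε ^ 2 / δ ^ 2 := by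
    have h32 : ((2:ℝ) ^ ((3:ℝ)/2)) ^ 2 = 8 := by
      rw [← Real.rpow_natCast ((2:ℝ) ^ ((3:ℝ)/2)) 2, ← Real.rpow_mul (by norm_num)]
      norm_num
    rw [div_pow, mul_pow, h32]
  have hrpos : (0:ℝ) ≤ 2 ^ ((3:ℝ)/2) * ε / δ := by positivity
  have hfin : Real.sqrt (8 * ε ^ 2 / δ ^ 2) = 2 ^ ((3:ℝ)/2) * ε / δ := by
    rw [← hsq, Real.sqrt_sq hrpos]
  calc Real.sqrt (2 - 2 * (s * c i)) ≤ Real.sqrt (8 * ε ^ 2 / δ ^ 2) :=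
        Real.sqrt_le_sqrt hmain
    _ = 2 ^ ((3:ℝ)/2) * ε / δ := hfin
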